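/- Let Δ be a 0-normalized Γ_{m,n}-semimodule and define g(y) = #([y, y+n) ∖ Δ) for y ∈ ℤ. Then for every x ∈ ℤ: (1) g(x−m) = g(x) + #{m-generators of Δ in [x, x+n)}; (2) g(x) = g(x+m) + #{m-cogenerators of Δ in [x, x+n)}; (3) the number of m-generators of Δ in [x, x+n) equals the number of n-cogenerators of Δ in [x−m, x). -/

import Mathlib

/-- The numerical semigroup generated by `m` and `n`, viewed as a subset of `ℤ`. -/
def Gamma (m n : ℕ) : Set ℤ := {x : ℤ | ∃ u v : ℕ, x = u * m + v * n}

/-- A 0-normalized `Γ_{m,n}`-semimodule: a subset of `ℤ≥0` containing `0` and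
closed under adding `m` and `n`. -/
def IsSemimodule (m n : ℕ) (Δ : Set ℤ) : Prop :=
  (∀ x ∈ Δ, 0 ≤ x) ∧ (0 : ℤ) ∈ Δ ∧ (∀ x ∈ Δ, x + m ∈ Δ) ∧ (∀ x ∈ Δ, x + n ∈ Δ)

/-- The number of gaps of `Δ` in the interval `[x, x + n)`. -/
noncomputable def gapCount (n : ℕ) (Δ : Set ℤ) (x : ℤ) : ℕ :=
  ({y : ℤ | x ≤ y ∧ y < x + n} \ Δ).ncard

/-! Moving the window `[y, y + L)` down by `d` trades each `d`-generator in it for a gap, and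
moving it up by `d` loses exactly its `d`-cogenerators. For (3), count the gaps of `[x - m, x + n)`
in two ways: as `[x - m, x - m + n)` followed by `[x - m + n, x + n)`, or as `[x - m, x)` followed
by `[x, x + n)`. The `m`-generators in `[x, x + n)` are the drop between the two `n`-windows, by (1),
and the `n`-cogenerators in `[x - m, x)` the drop between the two `m`-windows, by (2) with `m` and
`n` exchanged; the two counts therefore agree. -/

lemma finite_window (p : ℤ → Prop) (y z : ℤ) : {a | p a ∧ y ≤ a ∧ a < z}.Finite :=
  (Set.finite_Ico y z).subset fun _ ha => ha.2

lemma ncard_window_eq_add {p q r : ℤ → Prop} (hpqr : ∀ a, p a ↔ q a ∨ r a)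
    (hqr : ∀ a, q a → ¬ r a) (y z : ℤ) :
    {a | p a ∧ y ≤ a ∧ a < z}.ncard =
      {a | q a ∧ y ≤ a ∧ a < z}.ncard + {a | r a ∧ y ≤ a ∧ a < z}.ncard := by
  rw [← Set.ncard_union_eq _ (finite_window q y z) (finite_window r y z)]
  · congr 1
    ext a
    simp only [Set.mem_ofPred_eq, Set.mem_union, hpqr]
    tauto
  · exact Set.disjoint_left.mpr fun a hq hr => hqr a hq.1 hr.1

lemma ncard_window_add_ncard_window (p : ℤ → Prop) {y w z : ℤ} (hyw : y ≤ w) (hwz : w ≤ z) :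
    {a | p a ∧ y ≤ a ∧ a < w}.ncard + {a | p a ∧ w ≤ a ∧ a < z}.ncard =
      {a | p a ∧ y ≤ a ∧ a < z}.ncard := by
  rw [← Set.ncard_union_eq _ (finite_window p y w) (finite_window p w z)]
  · congr 1
    ext a
    simp only [Set.mem_union, Set.mem_ofPred_eq]
    constructor
    · rintro (⟨hp, h⟩ | ⟨hp, h⟩) <;> exact ⟨hp, by omega⟩
    · rintro ⟨hp, h⟩
      by_cases haw : a < w
      · exact .inl ⟨hp, h.1, haw⟩
      · exact .inr ⟨hp, by omega, h.2⟩
  · exact Set.disjoint_left.mpr fun a h h' => absurd h.2.2 (not_lt.mpr h'.2.1)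

section

variable {Δ : Set ℤ}

lemma gapCount_eq_ncard (L : ℕ) (y : ℤ) :
    gapCount L Δ y = {a | a ∉ Δ ∧ y ≤ a ∧ a < y + L}.ncard := by
  rw [gapCount, Set.sdiff_eq, Set.inter_comm]
  rfl

lemma gapCount_add_eq_ncard (L : ℕ) (y c : ℤ) :
    gapCount L Δ (y + c) = {a | a + c ∉ Δ ∧ y ≤ a ∧ a < y + L}.ncard := by
  rw [gapCount_eq_ncard, ← Set.ncard_preimage_of_injective_subset_range (add_left_injective c)
    (fun b _ => ⟨b - c, sub_add_cancel b c⟩)]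
  congr 1
  ext a
  simp only [Set.mem_preimage, Set.mem_ofPred_eq, add_right_comm y c, add_le_add_iff_right,
    add_lt_add_iff_right]

lemma gapCount_add_length (L₁ L₂ : ℕ) (y : ℤ) :
    gapCount (L₁ + L₂) Δ y = gapCount L₁ Δ y + gapCount L₂ Δ (y + L₁) := by
  simp only [gapCount_eq_ncard, Nat.cast_add, ← add_assoc]
  exact (ncard_window_add_ncard_window _ (by omega) (by omega)).symm

variable {d : ℤ} (hd : ∀ z ∈ Δ, z + d ∈ Δ)
include hd

lemma gapCount_sub_eq_add_ncard_generators (L : ℕ) (y : ℤ) :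
    gapCount L Δ (y - d) =
      gapCount L Δ y + {a | (a ∈ Δ ∧ a - d ∉ Δ) ∧ y ≤ a ∧ a < y + L}.ncard := by
  have hgap : ∀ a, a ∉ Δ → a - d ∉ Δ := fun a ha h => ha (by simpa using hd _ h)
  rw [sub_eq_add_neg, gapCount_add_eq_ncard, gapCount_eq_ncard]
  simp only [← sub_eq_add_neg]
  exact ncard_window_eq_add
    (fun a => ⟨fun h => (em' (a ∈ Δ)).imp_right (⟨·, h⟩), (·.elim (hgap a) And.right)⟩)
    (fun a h h' => h h'.1) y _

lemma gapCount_eq_add_ncard_cogenerators (L : ℕ) (y : ℤ) :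
    gapCount L Δ y =
      gapCount L Δ (y + d) + {b | (b ∉ Δ ∧ b + d ∈ Δ) ∧ y ≤ b ∧ b < y + L}.ncard := by
  have hgap : ∀ b, b + d ∉ Δ → b ∉ Δ := fun b hb h => hb (hd b h)
  rw [gapCount_add_eq_ncard, gapCount_eq_ncard]
  exact ncard_window_eq_add
    (fun b => ⟨fun h => (em' (b + d ∈ Δ)).imp_right (⟨h, ·⟩), (·.elim (hgap b) And.left)⟩)
    (fun b h h' => h h'.2) y _

end

lemma ncard_generators_eq_ncard_cogenerators {Δ : Set ℤ} {m n : ℕ}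
    (hΔm : ∀ z ∈ Δ, z + m ∈ Δ) (hΔn : ∀ z ∈ Δ, z + n ∈ Δ) (x : ℤ) :
    {a : ℤ | (a ∈ Δ ∧ a - m ∉ Δ) ∧ x ≤ a ∧ a < x + n}.ncard =
      {b : ℤ | (b ∉ Δ ∧ b + n ∈ Δ) ∧ x - m ≤ b ∧ b < x}.ncard := by
  have hgen := gapCount_sub_eq_add_ncard_generators hΔm n x
  have hcogen := gapCount_eq_add_ncard_cogenerators hΔn m (x - m)
  have hsplit₁ := gapCount_add_length (Δ := Δ) n m (x - m)
  have hsplit₂ := gapCount_add_length (Δ := Δ) m n (x - m)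
  rw [add_comm n m] at hsplit₁
  rw [sub_add_cancel] at hsplit₂ hcogen
  omega

theorem gapCount_generators_cogenerators_general (m n : ℕ) (Δ : Set ℤ) (hΔ : IsSemimodule m n Δ) (x : ℤ) :
    gapCount n Δ (x - m) =
        gapCount n Δ x + {a : ℤ | (a ∈ Δ ∧ a - m ∉ Δ) ∧ x ≤ a ∧ a < x + n}.ncard ∧
    gapCount n Δ x =
        gapCount n Δ (x + m) + {b : ℤ | (b ∉ Δ ∧ b + m ∈ Δ) ∧ x ≤ b ∧ b < x + n}.ncard ∧
    {a : ℤ | (a ∈ Δ ∧ a - m ∉ Δ) ∧ x ≤ a ∧ a < x + n}.ncard =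
        {b : ℤ | (b ∉ Δ ∧ b + n ∈ Δ) ∧ x - m ≤ b ∧ b < x}.ncard := by
  obtain ⟨-, -, hΔm, hΔn⟩ := hΔ
  exact ⟨gapCount_sub_eq_add_ncard_generators hΔm n x,
    gapCount_eq_add_ncard_cogenerators hΔm n x,
    ncard_generators_eq_ncard_cogenerators hΔm hΔn x⟩

/-- **Counting generators and cogenerators in an interval.** For a 0-normalized
`Γ_{m,n}`-semimodule `Δ`, `g(x) = #([x, x+n) ∖ Δ)` and every `x ∈ ℤ`:
(1) `g(x-m) = g(x) + #{m-generators in [x, x+n)}`;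
(2) `g(x) = g(x+m) + #{m-cogenerators in [x, x+n)}`;
(3) `#{m-generators in [x, x+n)} = #{n-cogenerators in [x-m, x)}`. -/
theorem gapCount_generators_cogenerators (m n : ℕ) (hm : 0 < m) (hn : 0 < n)
    (hmn : Nat.Coprime m n) (Δ : Set ℤ) (hΔ : IsSemimodule m n Δ) (x : ℤ) :
    gapCount n Δ (x - m) =
        gapCount n Δ x + {a : ℤ | (a ∈ Δ ∧ a - m ∉ Δ) ∧ x ≤ a ∧ a < x + n}.ncard ∧
    gapCount n Δ x =
        gapCount n Δ (x + m) + {b : ℤ | (b ∉ Δ ∧ b + m ∈ Δ) ∧ x ≤ b ∧ b < x + n}.ncard ∧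
    {a : ℤ | (a ∈ Δ ∧ a - m ∉ Δ) ∧ x ≤ a ∧ a < x + n}.ncard =
        {b : ℤ | (b ∉ Δ ∧ b + n ∈ Δ) ∧ x - m ≤ b ∧ b < x}.ncard :=
  gapCount_generators_cogenerators_general m n Δ hΔ x
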